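/- Let (A;E) be an exact category with exact products and let {I_j | j ∈ J} be a set-indexed family of special precovering ideals of (A;E). Then the intersection ⋂_{j ∈ J} I_j is a special precovering ideal of (A;E). -/

import Mathlib

/-!
For each `j` choose a special `I j`-precover of `B`: a morphism of conflations `(k j, d j, 𝟙 B)`
from `K0 j ⟶ D0 j ⟶ B` to `K1 j ⟶ D1 j ⟶ B` with `k j ∈ (I j)⊥`. Exactness of products makes
the product of these diagrams a morphism of conflations over `∏ B`; pulling it back along the
diagonal `B ⟶ ∏ B` gives one over `B` whose deflation factors through every `e j`, hence lies in
`⋂ I j`. Its left component is still `∏ k j`, which lies in `(⋂ I j)⊥` because `Ext(a, b) = 0`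
says exactly that `b` extends along the inflation of the pullback along `a` of every conflation
starting at the source of `b`, and such extensions can be taken componentwise into a product.
-/

open CategoryTheory CategoryTheory.Limits

universe w v u

namespace IdealApprox

/-- The data of an exact structure: a class of composable pairs
(the "conflations" `B ⟶ C ⟶ X`). -/
structure ExactStructureData (A : Type u) [Category.{v} A] [Preadditive A] :
    Type (max u v) where
  conf : ∀ ⦃B C X : A⦄, (B ⟶ C) → (C ⟶ X) → Prop

/-- An ideal of an additive category: an additive subbifunctor of `Hom`. -/
structure Ideal (A : Type u) [Category.{v} A] [Preadditive A] : Type (max u v) where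
  mem : ∀ ⦃X Y : A⦄, (X ⟶ Y) → Prop
  zero_mem : ∀ X Y : A, mem (0 : X ⟶ Y)
  add_mem : ∀ ⦃X Y : A⦄ ⦃f g : X ⟶ Y⦄, mem f → mem g → mem (f + g)
  neg_mem : ∀ ⦃X Y : A⦄ ⦃f : X ⟶ Y⦄, mem f → mem (-f)
  comp_mem : ∀ ⦃W X Y Z : A⦄ (h : W ⟶ X) ⦃g : X ⟶ Y⦄ (k : Y ⟶ Z), mem g → mem (h ≫ g ≫ k)

/-- A class of morphisms of a category. -/
abbrev MorClass (A : Type u) [Category.{v} A] : Type (max u v) :=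
  ∀ ⦃X Y : A⦄, (X ⟶ Y) → Prop

variable {A : Type u} [Category.{v} A] [Preadditive A]

/-- `(i, p)` is a kernel-cokernel pair. -/
structure IsKernelCokernelPair {B C X : A} (i : B ⟶ C) (p : C ⟶ X) : Prop where
  w : i ≫ p = 0
  isKernel : Nonempty (IsLimit (KernelFork.ofι i w))
  isCokernel : Nonempty (IsColimit (CokernelCofork.ofπ p w))

/-- The maximal candidate exact structure: all kernel-cokernel pairs.  On an abelian
category (such as a module category) this is the standard exact (abelian) structure. -/
def maxExact (A : Type u) [Category.{v} A] [Preadditive A] : ExactStructureData A :=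
  ⟨fun _ _ _ i p => IsKernelCokernelPair i p⟩

/-- `m` is an inflation: it occurs as the first map of a conflation. -/
def ExactStructureData.IsInflation (E : ExactStructureData A) {B C : A} (m : B ⟶ C) : Prop :=
  ∃ (X : A) (p : C ⟶ X), E.conf m p

/-- `p` is a deflation: it occurs as the second map of a conflation. -/
def ExactStructureData.IsDeflation (E : ExactStructureData A) {C X : A} (p : C ⟶ X) : Prop :=
  ∃ (B : A) (i : B ⟶ C), E.conf i p

/-- The axioms of a Quillen exact category `(A; E)`. -/
structure ExactStructureData.IsExact (E : ExactStructureData A) : Prop where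
  ker_coker : ∀ ⦃B C X : A⦄ ⦃i : B ⟶ C⦄ ⦃p : C ⟶ X⦄, E.conf i p → IsKernelCokernelPair i p
  iso_closed : ∀ ⦃B C X B' C' X' : A⦄ ⦃i : B ⟶ C⦄ ⦃p : C ⟶ X⦄ ⦃i' : B' ⟶ C'⦄ ⦃p' : C' ⟶ X'⦄
      (eB : B ≅ B') (eC : C ≅ C') (eX : X ≅ X'),
      i ≫ eC.hom = eB.hom ≫ i' → p ≫ eX.hom = eC.hom ≫ p' → E.conf i p → E.conf i' p'
  id_inflation : ∀ X : A, E.IsInflation (𝟙 X)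
  id_deflation : ∀ X : A, E.IsDeflation (𝟙 X)
  comp_inflation : ∀ ⦃X Y Z : A⦄ ⦃f : X ⟶ Y⦄ ⦃g : Y ⟶ Z⦄,
      E.IsInflation f → E.IsInflation g → E.IsInflation (f ≫ g)
  comp_deflation : ∀ ⦃X Y Z : A⦄ ⦃f : X ⟶ Y⦄ ⦃g : Y ⟶ Z⦄,
      E.IsDeflation f → E.IsDeflation g → E.IsDeflation (f ≫ g)
  pushout_inflation : ∀ ⦃X Y Z : A⦄ (m : X ⟶ Y) (f : X ⟶ Z), E.IsInflation m →
      ∃ (W : A) (g : Y ⟶ W) (m' : Z ⟶ W), IsPushout m f g m' ∧ E.IsInflation m'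
  pullback_deflation : ∀ ⦃X Y Z : A⦄ (p : Y ⟶ X) (f : Z ⟶ X), E.IsDeflation p →
      ∃ (W : A) (g : W ⟶ Y) (p' : W ⟶ Z), IsPullback g p' p f ∧ E.IsDeflation p'

/-- `Ext(a,b) = 0`: the composite `Ext(A1,B0) ⟶ Ext(A0,B1)` (pullback along `a`
followed by pushout along `b`) vanishes.  Elementwise: for every conflation
`B0 ⟶ C ⟶ A1` and every pushout of it along `b` (a conflation `B1 ⟶ C' ⟶ A1`),
the morphism `a` lifts along the deflation `C' ⟶ A1`, i.e. the pullback along `a`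
of the pushout along `b` splits. -/
def ExtZero (E : ExactStructureData A) {A0 A1 B0 B1 : A} (a : A0 ⟶ A1) (b : B0 ⟶ B1) : Prop :=
  ∀ ⦃C : A⦄ (i : B0 ⟶ C) (p : C ⟶ A1), E.conf i p →
    ∀ ⦃C' : A⦄ (c : C ⟶ C') (i' : B1 ⟶ C') (p' : C' ⟶ A1),
      IsPushout i b c i' → c ≫ p' = p → i' ≫ p' = 0 →
      ∃ s : A0 ⟶ C', s ≫ p' = a

/-- The class of morphisms left `Ext`-orthogonal to every member of `M`. -/
def leftPerp (E : ExactStructureData A) (M : MorClass A) : MorClass A :=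
  fun _ _ a => ∀ ⦃B0 B1 : A⦄ (b : B0 ⟶ B1), M b → ExtZero E a b

/-- The class of morphisms right `Ext`-orthogonal to every member of `M`. -/
def rightPerp (E : ExactStructureData A) (M : MorClass A) : MorClass A :=
  fun _ _ b => ∀ ⦃A0 A1 : A⦄ (a : A0 ⟶ A1), M a → ExtZero E a b

/-- Intersection of two classes of morphisms. -/
def interClass (M N : MorClass A) : MorClass A := fun _ _ f => M f ∧ N f

/-- Intersection of a set-indexed family of classes of morphisms. -/
def interFamily {ι : Type w} (J : ι → MorClass A) : MorClass A := fun _ _ f => ∀ i, J i f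

/-- `j : B ⟶ C0` is a special `J`-preenvelope of `B`: it belongs to `J` and appears as the
inflation of a conflation admitting a morphism of conflations (identity on `B`) whose
right-hand component lies in `⊥J`. -/
def IsSpecialPreenvelope (E : ExactStructureData A) (J : MorClass A) {B C0 : A}
    (j : B ⟶ C0) : Prop :=
  J j ∧ ∃ (A0 A1 C1 : A) (p0 : C0 ⟶ A0) (j' : B ⟶ C1) (p1 : C1 ⟶ A1)
      (c : C0 ⟶ C1) (a : A0 ⟶ A1),
    E.conf j p0 ∧ E.conf j' p1 ∧ j ≫ c = j' ∧ p0 ≫ a = c ≫ p1 ∧ leftPerp E J a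

/-- `J` is a special preenveloping ideal (class). -/
def SpecialPreenveloping (E : ExactStructureData A) (J : MorClass A) : Prop :=
  ∀ B : A, ∃ (C0 : A) (j : B ⟶ C0), IsSpecialPreenvelope E J j

/-- `e : D1 ⟶ B` is a special `I`-precover of `B`. -/
def IsSpecialPrecover (E : ExactStructureData A) (I : MorClass A) {D1 B : A}
    (e : D1 ⟶ B) : Prop :=
  I e ∧ ∃ (K0 K1 D0 : A) (i0 : K0 ⟶ D0) (p0 : D0 ⟶ B) (i1 : K1 ⟶ D1)
      (k : K0 ⟶ K1) (d : D0 ⟶ D1),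
    E.conf i0 p0 ∧ E.conf i1 e ∧ i0 ≫ d = k ≫ i1 ∧ d ≫ e = p0 ∧ rightPerp E I k

/-- `I` is a special precovering ideal (class). -/
def SpecialPrecovering (E : ExactStructureData A) (I : MorClass A) : Prop :=
  ∀ B : A, ∃ (D1 : A) (e : D1 ⟶ B), IsSpecialPrecover E I e

/-- The ideal of projective morphisms: morphisms left `Ext`-orthogonal to all morphisms. -/
def projClass (E : ExactStructureData A) : MorClass A :=
  fun _ _ p => ∀ ⦃B0 B1 : A⦄ (b : B0 ⟶ B1), ExtZero E p b

/-- The ideal of injective morphisms: morphisms right `Ext`-orthogonal to all morphisms. -/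
def injClass (E : ExactStructureData A) : MorClass A :=
  fun _ _ j => ∀ ⦃A0 A1 : A⦄ (a : A0 ⟶ A1), ExtZero E a j

/-- Every object is the codomain of a projective morphism. -/
def HasEnoughProjectiveMorphisms (E : ExactStructureData A) : Prop :=
  ∀ X : A, ∃ (P : A) (p : P ⟶ X), projClass E p

/-- Every object is the domain of an injective morphism. -/
def HasEnoughInjectiveMorphisms (E : ExactStructureData A) : Prop :=
  ∀ X : A, ∃ (Y : A) (j : X ⟶ Y), injClass E j

/-- `(I, J)` is an ideal cotorsion pair: `I = ⊥J` and `J = I⊥`. -/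
def IsIdealCotorsionPair (E : ExactStructureData A) (I J : MorClass A) : Prop :=
  (∀ ⦃X Y : A⦄ (f : X ⟶ Y), I f ↔ leftPerp E J f) ∧
  (∀ ⦃X Y : A⦄ (f : X ⟶ Y), J f ↔ rightPerp E I f)

/-- A complete ideal cotorsion pair: `I` is special precovering and `J` is special
preenveloping. -/
def IsCompleteIdealCotorsionPair (E : ExactStructureData A) (I J : MorClass A) : Prop :=
  IsIdealCotorsionPair E I J ∧ SpecialPrecovering E I ∧ SpecialPreenveloping E J

/-- `c = b ⋆ a` is an ME (mono-epi) extension of the arrow `a` by the arrow `b`. -/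
def IsMEExtension (E : ExactStructureData A) {B0 B1 A0 A1 C0 C1 : A}
    (b : B0 ⟶ B1) (a : A0 ⟶ A1) (c : C0 ⟶ C1) : Prop :=
  ∃ (i0 : B0 ⟶ C0) (p0 : C0 ⟶ A0) (i1 : B1 ⟶ C1) (p1 : C1 ⟶ A1)
    (Cm : A) (im : B0 ⟶ Cm) (pm : Cm ⟶ A1) (c1 : C0 ⟶ Cm) (c2 : Cm ⟶ C1),
    E.conf i0 p0 ∧ E.conf i1 p1 ∧ E.conf im pm ∧ c = c1 ≫ c2 ∧
    i0 ≫ c1 = im ∧ c1 ≫ pm = p0 ≫ a ∧ im ≫ c2 = b ≫ i1 ∧ c2 ≫ p1 = pm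

/-- `I ⋄ K` : the class of all ME-extensions `i ⋆ k` with `i ∈ I`, `k ∈ K`. -/
def diamond (E : ExactStructureData A) (I K : MorClass A) : MorClass A :=
  fun _ _ c => ∃ (B0 B1 A0 A1 : A) (b : B0 ⟶ B1) (a : A0 ⟶ A1),
    I b ∧ K a ∧ IsMEExtension E b a c

/-- `j` is a `J`-preenvelope (left approximation). -/
def IsPreenvelope (J : MorClass A) {B C : A} (j : B ⟶ C) : Prop :=
  J j ∧ ∀ ⦃C' : A⦄ (j' : B ⟶ C'), J j' → ∃ f : C ⟶ C', j ≫ f = j'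

/-- `J` is a preenveloping ideal (class). -/
def Preenveloping (J : MorClass A) : Prop :=
  ∀ B : A, ∃ (C : A) (j : B ⟶ C), IsPreenvelope J j

/-- `e` is an `I`-precover (right approximation). -/
def IsPrecover (I : MorClass A) {D B : A} (e : D ⟶ B) : Prop :=
  I e ∧ ∀ ⦃D' : A⦄ (e' : D' ⟶ B), I e' → ∃ f : D' ⟶ D, f ≫ e = e'

/-- `I` is a precovering ideal (class). -/
def Precovering (I : MorClass A) : Prop :=
  ∀ B : A, ∃ (D : A) (e : D ⟶ B), IsPrecover I e

/-- `J` is monic preenveloping: every object admits a preenvelope which is an inflation. -/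
def MonicPreenveloping (E : ExactStructureData A) (J : MorClass A) : Prop :=
  ∀ B : A, ∃ (C : A) (j : B ⟶ C), E.IsInflation j ∧ IsPreenvelope J j

/-- `I` is epic precovering: every object admits a precover which is a deflation. -/
def EpicPrecovering (E : ExactStructureData A) (I : MorClass A) : Prop :=
  ∀ B : A, ∃ (D : A) (e : D ⟶ B), E.IsDeflation e ∧ IsPrecover I e

/-- A conflation of arrows `b ⟶ c ⟶ a` in `(Arr(A); Arr(E))`, encoded componentwise:
two conflations `(i0, p0)`, `(i1, p1)` together with the commutativity of the two squares. -/
def IsArrowConf (E : ExactStructureData A) {B0 B1 C0 C1 A0 A1 : A}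
    (b : B0 ⟶ B1) (c : C0 ⟶ C1) (a : A0 ⟶ A1)
    (i0 : B0 ⟶ C0) (p0 : C0 ⟶ A0) (i1 : B1 ⟶ C1) (p1 : C1 ⟶ A1) : Prop :=
  E.conf i0 p0 ∧ E.conf i1 p1 ∧ i0 ≫ c = b ≫ i1 ∧ p0 ≫ a = c ≫ p1

/-- An ME (mono-epi) conflation of arrows, encoded componentwise. -/
def IsMEArrowConf (E : ExactStructureData A) {B0 B1 C0 C1 A0 A1 : A}
    (b : B0 ⟶ B1) (c : C0 ⟶ C1) (a : A0 ⟶ A1)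
    (i0 : B0 ⟶ C0) (p0 : C0 ⟶ A0) (i1 : B1 ⟶ C1) (p1 : C1 ⟶ A1) : Prop :=
  IsArrowConf E b c a i0 p0 i1 p1 ∧
  ∃ (Cm : A) (im : B0 ⟶ Cm) (pm : Cm ⟶ A1) (c1 : C0 ⟶ Cm) (c2 : Cm ⟶ C1),
    E.conf im pm ∧ c = c1 ≫ c2 ∧ i0 ≫ c1 = im ∧ c1 ≫ pm = p0 ≫ a ∧
    im ≫ c2 = b ≫ i1 ∧ c2 ≫ p1 = pm

/-- Equivalence (isomorphism fixing the two end arrows) of conflations of arrows. -/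
def ArrowConfEquiv {B0 B1 C0 C1 D0 D1 A0 A1 : A}
    (c : C0 ⟶ C1) (i0 : B0 ⟶ C0) (p0 : C0 ⟶ A0) (i1 : B1 ⟶ C1) (p1 : C1 ⟶ A1)
    (d : D0 ⟶ D1) (j0 : B0 ⟶ D0) (q0 : D0 ⟶ A0) (j1 : B1 ⟶ D1) (q1 : D1 ⟶ A1) : Prop :=
  ∃ (e0 : C0 ≅ D0) (e1 : C1 ≅ D1),
    c ≫ e1.hom = e0.hom ≫ d ∧ i0 ≫ e0.hom = j0 ∧ e0.hom ≫ q0 = p0 ∧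
    i1 ≫ e1.hom = j1 ∧ e1.hom ≫ q1 = p1

/-- `(A; E)` has exact coproducts: coproducts exist and a coproduct of conflations is a
conflation. -/
def HasExactCoproducts [HasCoproducts.{w} A] (E : ExactStructureData A) : Prop :=
  ∀ (ι : Type w) (B C X : ι → A) (i : ∀ j, B j ⟶ C j) (p : ∀ j, C j ⟶ X j),
    (∀ j, E.conf (i j) (p j)) → E.conf (Limits.Sigma.map i) (Limits.Sigma.map p)

/-- `(A; E)` has exact products: products exist and a product of conflations is a
conflation. -/
def HasExactProducts [HasProducts.{w} A] (E : ExactStructureData A) : Prop :=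
  ∀ (ι : Type w) (B C X : ι → A) (i : ∀ j, B j ⟶ C j) (p : ∀ j, C j ⟶ X j),
    (∀ j, E.conf (i j) (p j)) → E.conf (Limits.Pi.map i) (Limits.Pi.map p)

/-- The ideal generated by a set-indexed family of morphisms: finite sums of
composites through the generators. -/
def genIdeal {ι : Type w} {X0 X1 : ι → A} (m : ∀ i, X0 i ⟶ X1 i) : MorClass A :=
  fun X Y f => ∃ (n : ℕ) (j : Fin n → ι) (g : ∀ k : Fin n, X ⟶ X0 (j k))
    (h : ∀ k : Fin n, X1 (j k) ⟶ Y),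
    f = ∑ k : Fin n, g k ≫ m (j k) ≫ h k

/-- The sum of a set-indexed family of ideals: finite sums of members. -/
def idealFamilySum {ι : Type w} (I : ι → Ideal A) : MorClass A :=
  fun X Y f => ∃ (n : ℕ) (j : Fin n → ι) (g : Fin n → (X ⟶ Y)),
    (∀ k, (I (j k)).mem (g k)) ∧ f = ∑ k : Fin n, g k

/-- Containment of ideals. -/
def Ideal.le (I J : Ideal A) : Prop := ∀ ⦃X Y : A⦄ ⦃f : X ⟶ Y⦄, I.mem f → J.mem f

/-- Intersection of two ideals. -/
def Ideal.inf (I J : Ideal A) : Ideal A where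
  mem := fun _ _ f => I.mem f ∧ J.mem f
  zero_mem := fun X Y => ⟨I.zero_mem X Y, J.zero_mem X Y⟩
  add_mem := fun _ _ _ _ hf hg => ⟨I.add_mem hf.1 hg.1, J.add_mem hf.2 hg.2⟩
  neg_mem := fun _ _ _ hf => ⟨I.neg_mem hf.1, J.neg_mem hf.2⟩
  comp_mem := fun _ _ _ _ h _ k hg => ⟨I.comp_mem h k hg.1, J.comp_mem h k hg.2⟩

/-- Sum of two ideals. -/
def Ideal.sum (I J : Ideal A) : Ideal A where
  mem := fun _ _ f => ∃ g h, I.mem g ∧ J.mem h ∧ f = g + h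
  zero_mem := fun X Y => ⟨0, 0, I.zero_mem X Y, J.zero_mem X Y, by simp⟩
  add_mem := by
    rintro X Y f g ⟨f1, f2, hf1, hf2, rfl⟩ ⟨g1, g2, hg1, hg2, rfl⟩
    exact ⟨f1 + g1, f2 + g2, I.add_mem hf1 hg1, J.add_mem hf2 hg2, by abel⟩
  neg_mem := by
    rintro X Y f ⟨f1, f2, h1, h2, rfl⟩
    exact ⟨-f1, -f2, I.neg_mem h1, J.neg_mem h2, by abel⟩
  comp_mem := by
    rintro W X Y Z h g k ⟨g1, g2, h1, h2, rfl⟩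
    exact ⟨h ≫ g1 ≫ k, h ≫ g2 ≫ k, I.comp_mem h k h1, J.comp_mem h k h2, by
      simp [Preadditive.add_comp, Preadditive.comp_add]⟩

/-- An ideal closed under set-indexed coproducts of morphisms. -/
def ClosedUnderCoproducts [HasCoproducts.{w} A] (I : Ideal A) : Prop :=
  ∀ ⦃ι : Type w⦄ ⦃X0 X1 : ι → A⦄ (f : ∀ i, X0 i ⟶ X1 i),
    (∀ i, I.mem (f i)) → I.mem (Limits.Sigma.map f)

/-- An ideal closed under ME-extensions by projective morphisms. -/
def ClosedUnderProjME (E : ExactStructureData A) (I : Ideal A) : Prop :=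
  ∀ ⦃P0 P1 K0 K1 C0 C1 : A⦄ (p : P0 ⟶ P1) (k : K0 ⟶ K1) (c : C0 ⟶ C1),
    projClass E p → I.mem k → IsMEExtension E p k c → I.mem c

/-- `Ext_{Arr(A)}(a, b)` is a set: there is a set-indexed family of conflations of arrows
`b ⟶ c^ζ ⟶ a` representing every conflation of arrows from `b` to `a` up to equivalence. -/
def ExtArrowSmall (E : ExactStructureData A) {A0 A1 B0 B1 : A}
    (a : A0 ⟶ A1) (b : B0 ⟶ B1) : Prop :=
  ∃ (ι : Type w) (C0 C1 : ι → A) (c : ∀ z, C0 z ⟶ C1 z)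
    (i0 : ∀ z, B0 ⟶ C0 z) (p0 : ∀ z, C0 z ⟶ A0) (i1 : ∀ z, B1 ⟶ C1 z) (p1 : ∀ z, C1 z ⟶ A1),
    (∀ z, IsArrowConf E b (c z) a (i0 z) (p0 z) (i1 z) (p1 z)) ∧
    ∀ ⦃D0 D1 : A⦄ (d : D0 ⟶ D1) (j0 : B0 ⟶ D0) (q0 : D0 ⟶ A0) (j1 : B1 ⟶ D1) (q1 : D1 ⟶ A1),
      IsArrowConf E b d a j0 q0 j1 q1 →
      ∃ z, ArrowConfEquiv (c z) (i0 z) (p0 z) (i1 z) (p1 z) d j0 q0 j1 q1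

/-- `Ext(X, B)` is a set: there is a set-indexed family of conflations `B ⟶ C^z ⟶ X`
representing every conflation from `B` to `X` up to equivalence. -/
def ExtObjSmall (E : ExactStructureData A) (X B : A) : Prop :=
  ∃ (ι : Type w) (C : ι → A) (m : ∀ z, B ⟶ C z) (p : ∀ z, C z ⟶ X),
    (∀ z, E.conf (m z) (p z)) ∧
    ∀ ⦃D : A⦄ (m' : B ⟶ D) (p' : D ⟶ X), E.conf m' p' →
      ∃ z, ∃ e : C z ≅ D, m z ≫ e.hom = m' ∧ e.hom ≫ p' = p z

/-- `Add X`: direct summands of coproducts of copies of `X`. -/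
def AddClosure [HasCoproducts.{w} A] (X : A) : A → Prop := fun M =>
  ∃ (ι : Type w) (s : M ⟶ ∐ (fun _ : ι => X)) (r : (∐ fun _ : ι => X) ⟶ M), s ≫ r = 𝟙 M

/-- The object ideal of morphisms factoring through an object of `S`. -/
def objIdeal (S : A → Prop) : MorClass A := fun X Y f =>
  ∃ (M : A) (g : X ⟶ M) (h : M ⟶ Y), S M ∧ f = g ≫ h

section KernelsOfSquares

variable {C : Type*} [Category C] [HasZeroMorphisms C]

noncomputable def isLimitKernelForkOfIsPullback {K X Y W Z : C} {i : K ⟶ X} {p : X ⟶ Y}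
    {g : W ⟶ X} {q : W ⟶ Z} {f : Z ⟶ Y} (hpb : IsPullback g q p f) {hip : i ≫ p = 0}
    (hi : IsLimit (KernelFork.ofι i hip)) {κ : K ⟶ W} (hκg : κ ≫ g = i) (hκq : κ ≫ q = 0) :
    IsLimit (KernelFork.ofι κ hκq) :=
  have lift_comp (T : C) (t : T ⟶ W) (ht : t ≫ q = 0) :
      { l : T ⟶ K // l ≫ i = t ≫ g } :=
    KernelFork.IsLimit.lift' hi (t ≫ g)
      (by rw [Category.assoc, hpb.w, reassoc_of% ht, zero_comp])
  KernelFork.IsLimit.ofι _ _ (fun t ht => (lift_comp _ t ht).1)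
    (fun t ht => hpb.hom_ext (by simp [hκg, (lift_comp _ t ht).2]) (by simp [hκq, ht]))
    (fun t ht m hm => Fork.IsLimit.hom_ext hi (by simp [← hm, hκg, (lift_comp _ t ht).2]))

noncomputable def isColimitCokernelCoforkOfIsPushout {K X Y K' Y' : C} {i : K ⟶ X}
    {p : X ⟶ Y} {f : K ⟶ K'} {c : X ⟶ Y'} {i' : K' ⟶ Y'} (hpo : IsPushout i f c i')
    {hip : i ≫ p = 0} (hp : IsColimit (CokernelCofork.ofπ p hip)) {p' : Y' ⟶ Y}
    (hcp : c ≫ p' = p) (hip' : i' ≫ p' = 0) : IsColimit (CokernelCofork.ofπ p' hip') :=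
  have desc_comp (T : C) (t : Y' ⟶ T) (ht : i' ≫ t = 0) :
      { l : Y ⟶ T // p ≫ l = c ≫ t } :=
    CokernelCofork.IsColimit.desc' hp (c ≫ t)
      (by rw [← Category.assoc, hpo.w, Category.assoc, ht, comp_zero])
  CokernelCofork.IsColimit.ofπ _ _ (fun t ht => (desc_comp _ t ht).1)
    (fun t ht => hpo.hom_ext (by simp [reassoc_of% hcp, (desc_comp _ t ht).2])
      (by simp [reassoc_of% hip', ht]))
    (fun t ht m hm => Cofork.IsColimit.hom_ext hp
      (by simp [← hm, reassoc_of% hcp, (desc_comp _ t ht).2]))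

end KernelsOfSquares

namespace ExactStructureData.IsExact

variable {E : ExactStructureData A}

lemma exists_lift_of_comp_eq_zero (hE : E.IsExact) {K X Y T : A} {i : K ⟶ X} {p : X ⟶ Y}
    (h : E.conf i p) (t : T ⟶ X) (ht : t ≫ p = 0) : ∃ u : T ⟶ K, u ≫ i = t :=
  ⟨_, (KernelFork.IsLimit.lift' (hE.ker_coker h).isKernel.some t ht).2⟩

lemma exists_desc_of_comp_eq_zero (hE : E.IsExact) {K X Y T : A} {i : K ⟶ X} {p : X ⟶ Y}
    (h : E.conf i p) (t : X ⟶ T) (ht : i ≫ t = 0) : ∃ u : Y ⟶ T, p ≫ u = t :=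
  ⟨_, (CokernelCofork.IsColimit.desc' (hE.ker_coker h).isCokernel.some t ht).2⟩

lemma cancel_inflation (hE : E.IsExact) {K X Y T : A} {i : K ⟶ X} {p : X ⟶ Y}
    (h : E.conf i p) {u v : T ⟶ K} (huv : u ≫ i = v ≫ i) : u = v :=
  Fork.IsLimit.hom_ext (hE.ker_coker h).isKernel.some huv

lemma cancel_deflation (hE : E.IsExact) {K X Y T : A} {i : K ⟶ X} {p : X ⟶ Y}
    (h : E.conf i p) {u v : Y ⟶ T} (huv : p ≫ u = p ≫ v) : u = v :=
  Cofork.IsColimit.hom_ext (hE.ker_coker h).isCokernel.some huv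

lemma conf_of_isLimit_kernelFork (hE : E.IsExact) {K K' X Y : A} {i' : K' ⟶ X} {p : X ⟶ Y}
    (h : E.conf i' p) {i : K ⟶ X} {hip : i ≫ p = 0} (hi : IsLimit (KernelFork.ofι i hip)) :
    E.conf i p :=
  have hi' := (hE.ker_coker h).isKernel.some
  hE.iso_closed (IsLimit.conePointUniqueUpToIso hi' hi) (Iso.refl X) (Iso.refl Y)
    (by simpa using (IsLimit.conePointUniqueUpToIso_hom_comp hi' hi WalkingParallelPair.zero).symm)
    (by simp) h

lemma conf_of_isColimit_cokernelCofork (hE : E.IsExact) {K X Y Y' : A} {i : K ⟶ X}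
    {p' : X ⟶ Y'} (h : E.conf i p') {p : X ⟶ Y} {hip : i ≫ p = 0}
    (hp : IsColimit (CokernelCofork.ofπ p hip)) : E.conf i p :=
  have hp' := (hE.ker_coker h).isCokernel.some
  hE.iso_closed (Iso.refl K) (Iso.refl X) (IsColimit.coconePointUniqueUpToIso hp' hp) (by simp)
    (by simpa using IsColimit.comp_coconePointUniqueUpToIso_hom hp' hp WalkingParallelPair.one) h

lemma exists_pullback_conf (hE : E.IsExact) {K X Y Z : A} {i : K ⟶ X} {p : X ⟶ Y}
    (h : E.conf i p) (f : Z ⟶ Y) :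
    ∃ (W : A) (g : W ⟶ X) (q : W ⟶ Z) (κ : K ⟶ W),
      IsPullback g q p f ∧ E.conf κ q ∧ κ ≫ g = i := by
  obtain ⟨W, g, q, hpb, K', i', hq⟩ := hE.pullback_deflation p f ⟨K, i, h⟩
  have hip := (hE.ker_coker h).w
  let κ : K ⟶ W := hpb.lift i 0 (by simp [hip])
  have hκg : κ ≫ g = i := hpb.lift_fst _ _ _
  have hκq : κ ≫ q = 0 := hpb.lift_snd _ _ _
  exact ⟨W, g, q, κ, hpb, hE.conf_of_isLimit_kernelFork hq
    (isLimitKernelForkOfIsPullback hpb (hE.ker_coker h).isKernel.some hκg hκq), hκg⟩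

lemma exists_pushout_conf (hE : E.IsExact) {K X Y K' : A} {i : K ⟶ X} {p : X ⟶ Y}
    (h : E.conf i p) (f : K ⟶ K') :
    ∃ (X' : A) (c : X ⟶ X') (i' : K' ⟶ X') (p' : X' ⟶ Y),
      IsPushout i f c i' ∧ E.conf i' p' ∧ c ≫ p' = p := by
  obtain ⟨X', c, i', hpo, Y', p', hi'⟩ := hE.pushout_inflation i f ⟨Y, p, h⟩
  have hip := (hE.ker_coker h).w
  let p'' : X' ⟶ Y := hpo.desc p 0 (by simp [hip])
  have hcp : c ≫ p'' = p := hpo.inl_desc _ _ _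
  have hip'' : i' ≫ p'' = 0 := hpo.inr_desc _ _ _
  exact ⟨X', c, i', p'', hpo, hE.conf_of_isColimit_cokernelCofork hi'
    (isColimitCokernelCoforkOfIsPushout hpo (hE.ker_coker h).isCokernel.some hcp hip''), hcp⟩

end ExactStructureData.IsExact

section Ext

variable {E : ExactStructureData A}

lemma ExtZero.exists_extension (hE : E.IsExact) {A0 A1 B0 B1 : A} {a : A0 ⟶ A1}
    {b : B0 ⟶ B1} (hab : ExtZero E a b) {X C W : A} {i : B0 ⟶ C} {p : C ⟶ A1}
    (hip : E.conf i p) {g : W ⟶ C} {q : W ⟶ A0} (hgq : g ≫ p = q ≫ a) {κ : X ⟶ W}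
    {f : X ⟶ B0} (hκg : κ ≫ g = f ≫ i) (hκq : κ ≫ q = 0) : ∃ t : W ⟶ B1, κ ≫ t = f ≫ b := by
  obtain ⟨C', c, i', p', hpo, hi'p', hcp'⟩ := hE.exists_pushout_conf hip b
  obtain ⟨s, hs⟩ := hab i p hip c i' p' hpo hcp' (hE.ker_coker hi'p').w
  obtain ⟨t, ht⟩ := hE.exists_lift_of_comp_eq_zero hi'p' (g ≫ c - q ≫ s)
    (by simp [hs, hcp', hgq])
  refine ⟨t, hE.cancel_inflation hi'p' ?_⟩
  simp [ht, reassoc_of% hκg, reassoc_of% hκq, hpo.w]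

lemma extZero_of_forall_exists_extension (hE : E.IsExact) {A0 A1 B0 B1 : A} {a : A0 ⟶ A1}
    {b : B0 ⟶ B1}
    (h : ∀ ⦃C W : A⦄ (i : B0 ⟶ C) (p : C ⟶ A1), E.conf i p →
      ∀ (κ : B0 ⟶ W) (g : W ⟶ C) (q : W ⟶ A0), E.conf κ q → κ ≫ g = i → g ≫ p = q ≫ a →
        ∃ t : W ⟶ B1, κ ≫ t = b) :
    ExtZero E a b := by
  intro C i p hip C' c i' p' hpo hcp hip'
  obtain ⟨W, g, q, κ, hpb, hκq, hκg⟩ := hE.exists_pullback_conf hip a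
  obtain ⟨t, ht⟩ := h i p hip κ g q hκq hκg hpb.w
  obtain ⟨s, hs⟩ := hE.exists_desc_of_comp_eq_zero hκq (g ≫ c - t ≫ i')
    (by simp [reassoc_of% hκg, reassoc_of% ht, hpo.w])
  exact ⟨s, hE.cancel_deflation hκq (by simp [reassoc_of% hs, hcp, hip', hpb.w])⟩

lemma extZero_pi_map (hE : E.IsExact) {J : Type*} {K0 K1 : J → A} [HasProduct K0]
    [HasProduct K1] (k : ∀ j, K0 j ⟶ K1 j) {A0 A1 : A} (a : A0 ⟶ A1)
    (hk : ∀ j, ExtZero E a (k j)) : ExtZero E a (Limits.Pi.map k) := by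
  refine extZero_of_forall_exists_extension hE fun C W i p hip κ g q hκq hκg hgq => ?_
  have (j : J) : ∃ t : W ⟶ K1 j, κ ≫ t = Pi.π K0 j ≫ k j := by
    obtain ⟨Cj, c, ij, pj, hpo, hconf, hcp⟩ := hE.exists_pushout_conf hip (Pi.π K0 j)
    exact (hk j).exists_extension hE hconf (g := g ≫ c) (by simp [hcp, hgq])
      (by rw [reassoc_of% hκg, hpo.w]) (hE.ker_coker hκq).w
  choose t ht using this
  exact ⟨Pi.lift t, by ext j; simp [ht]⟩

lemma exists_isSpecialPrecover_of_pullback (hE : E.IsExact)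
    {I' : MorClass A} {K0 K1 D0 D1 X Z : A} {i0 : K0 ⟶ D0} {p0 : D0 ⟶ X} {i1 : K1 ⟶ D1}
    {e : D1 ⟶ X} {k : K0 ⟶ K1} {d : D0 ⟶ D1} (h0 : E.conf i0 p0) (h1 : E.conf i1 e)
    (hsq : i0 ≫ d = k ≫ i1) (hde : d ≫ e = p0) (hk : rightPerp E I' k) (f : Z ⟶ X)
    (hI' : ∀ ⦃W : A⦄ (g : W ⟶ D1) (q : W ⟶ Z), g ≫ e = q ≫ f → I' q) :
    ∃ (W : A) (q : W ⟶ Z), IsSpecialPrecover E I' q := by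
  obtain ⟨W0, g0, q0, κ0, hpb0, hκq0, hκg0⟩ := hE.exists_pullback_conf h0 f
  obtain ⟨W1, g1, q1, κ1, hpb1, hκq1, hκg1⟩ := hE.exists_pullback_conf h1 f
  let d' : W0 ⟶ W1 := hpb1.lift (g0 ≫ d) q0 (by simp [hde, hpb0.w])
  refine ⟨W1, q1, hI' g1 q1 hpb1.w, K0, K1, W0, κ0, q0, κ1, k, d', hκq0, hκq1, ?_,
    hpb1.lift_snd _ _ _, hk⟩
  apply hpb1.hom_ext
  · simp [d', reassoc_of% hκg0, hκg1, hsq]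
  · simp [d', (hE.ker_coker hκq0).w, (hE.ker_coker hκq1).w]

end Ext

variable [HasProducts.{w} A]

/-- infinite intersections of special precovering ideals.  In an
exact category with exact products, the intersection of a set-indexed family of special
precovering ideals is special precovering. -/
theorem statement13 (E : ExactStructureData A) (hE : E.IsExact)
    (hpr : HasExactProducts.{w} E)
    {ι : Type w} (I : ι → Ideal A)
    (hI : ∀ j, SpecialPrecovering E (I j).mem) :
    SpecialPrecovering E (interFamily fun j => (I j).mem) := by
  intro B
  choose D1 e he K0 K1 D0 i0 p0 i1 k d h0 h1 hsq hde hk using fun j => hI j B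
  refine exists_isSpecialPrecover_of_pullback hE (hpr _ _ _ _ i0 p0 h0) (hpr _ _ _ _ i1 e h1)
    (k := Limits.Pi.map k) (d := Limits.Pi.map d) (by simp [Limits.Pi.map_comp_map, hsq])
    (by simp [Limits.Pi.map_comp_map, hde])
    (fun _ _ a ha => extZero_pi_map hE k a fun j => hk j a (ha j))
    (Pi.lift fun _ => 𝟙 B) fun W g q hgq j => ?_
  have hq : q = (g ≫ Pi.π D1 j) ≫ e j ≫ 𝟙 B := by
    simpa using (congrArg (· ≫ Pi.π _ j) hgq).symm
  rw [hq]
  exact (I j).comp_mem _ _ (he j)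

end IdealApprox
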